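/- arXiv:1706.03241 — 2 statements merged into one kernel-verified Lean document; each statement's English description precedes it below -/
import Mathlib

section
/- Let X be a real random variable with the Gaussian distribution of mean 0 and variance v ≥ 0 (gaussianReal 0 v), let a, b ∈ ℝ, and let ε ∈ (0,1). Then the lower-bound chance constraint P(a + X ≥ b) ≥ 1 − ε holds if and only if a − √v · Φ^{-1}(1−ε) ≥ b, where Φ^{-1} is the quantile function (inverse cumulative distribution function) of the standard normal distribution. -/
/-!
Writing `Y = -√v · Z` with `Z` standard normal, the event `a + Y ≥ b` becomes `√v · Z ≤ a - b`.
Since the standard normal cdf `Φ` is strictly increasing, `{z | √v z ≤ a - b}` has mass at least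
`Φ q` exactly when it contains `(-∞, q]`, i.e. when `√v q ≤ a - b`.
-/

open MeasureTheory ProbabilityTheory

lemma cdf_gaussianReal_strictMono (m : ℝ) {v : NNReal} (hv : v ≠ 0) :
    StrictMono (cdf (gaussianReal m v)) := by
  intro x y hxy
  have hIoc : gaussianReal m v (Set.Ioc x y) ≠ 0 := fun h ↦
    hxy.not_ge (by simpa [Real.volume_Ioc] using gaussianReal_absolutelyContinuous' m hv h)
  rwa [← measure_cdf (gaussianReal m v), StieltjesFunction.measure_Ioc, ne_eq,
    ENNReal.ofReal_eq_zero, not_le, sub_pos] at hIoc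

lemma gaussianReal_zero_eq_map_const_mul {v : NNReal} {c : ℝ} (hc : c ^ 2 = v) :
    gaussianReal 0 v = (gaussianReal 0 1).map (c * ·) := by
  rw [gaussianReal_map_const_mul, mul_zero, mul_one]
  congr
  exact NNReal.eq hc.symm

lemma ofReal_cdf_le_measure_const_mul_le_iff {ν : Measure ℝ} [IsProbabilityMeasure ν]
    (hν : StrictMono (cdf ν)) {s : ℝ} (hs : 0 ≤ s) (q c : ℝ) :
    ENNReal.ofReal (cdf ν q) ≤ ν {z | s * z ≤ c} ↔ s * q ≤ c := by
  rw [ofReal_cdf]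
  constructor
  · intro hle
    by_contra! hlt
    obtain ⟨q', hq'q, hsub⟩ : ∃ q' < q, {z | s * z ≤ c} ⊆ Set.Iic q' := by
      rcases hs.eq_or_lt with rfl | hs
      · exact ⟨q - 1, by linarith, fun z (hz : 0 * z ≤ c) ↦ by
          simp only [zero_mul] at hz hlt; linarith⟩
      · exact ⟨c / s, (div_lt_iff₀' hs).2 hlt, fun z hz ↦ (le_div_iff₀' hs).2 hz⟩
    have hcdf : ν (Set.Iic q') < ν (Set.Iic q) := by
      rw [← ofReal_cdf, ← ofReal_cdf]
      exact (ENNReal.ofReal_lt_ofReal_iff_of_nonneg (cdf_nonneg ν q')).2 (hν hq'q)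
    exact (hle.trans (measure_mono hsub)).not_gt hcdf
  · intro hsq
    exact measure_mono fun z (hz : z ≤ q) ↦ (mul_le_mul_of_nonneg_left hz hs).trans hsq

theorem stmt_3_general {X : Type} [MeasurableSpace X] (μ : Measure X)
    (v : NNReal) (Y : X → ℝ)
    (hY : Measure.map Y μ = gaussianReal 0 v)
    (a b ε : ℝ)
    (q : ℝ) (hq : cdf (gaussianReal 0 1) q = 1 - ε) :
    ENNReal.ofReal (1 - ε) ≤ μ {x | a + Y x ≥ b} ↔ a - Real.sqrt v * q ≥ b := by
  have hYae : AEMeasurable Y μ := .of_map_ne_zero (by simp [hY, NeZero.ne])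
  have hlaw : μ {x | a + Y x ≥ b} = gaussianReal 0 1 {z | Real.sqrt v * z ≤ a - b} := by
    have hc : (-Real.sqrt v) ^ 2 = v := by simp
    have hS : MeasurableSet {y : ℝ | b ≤ a + y} :=
      measurableSet_le measurable_const (measurable_const_add a)
    rw [show {x | a + Y x ≥ b} = Y ⁻¹' {y | b ≤ a + y} from rfl,
      ← Measure.map_apply_of_aemeasurable hYae hS, hY, gaussianReal_zero_eq_map_const_mul hc,
      Measure.map_apply (measurable_const_mul _) hS]
    congr 1
    ext z
    simp only [Set.mem_preimage, Set.mem_ofPred_eq]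
    constructor <;> intro <;> linarith
  rw [hlaw, ← hq, ofReal_cdf_le_measure_const_mul_le_iff
    (cdf_gaussianReal_strictMono 0 one_ne_zero) (Real.sqrt_nonneg v)]
  exact le_sub_comm

/-- Let `Y` be a real random variable with law `gaussianReal 0 v`
(mean `0`, variance `v ≥ 0`), `a, b ∈ ℝ`, `ε ∈ (0,1)`, and let `q = Φ⁻¹(1-ε)` be the
point where the standard normal cdf equals `1 - ε`. Then the lower-bound chance
constraint `P(a + Y ≥ b) ≥ 1 - ε` holds if and only if `a - √v · Φ⁻¹(1-ε) ≥ b`. -/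
theorem stmt_3 {X : Type} [MeasurableSpace X] (μ : Measure X) [IsProbabilityMeasure μ]
    (v : NNReal) (Y : X → ℝ) (hYmeas : Measurable Y)
    (hY : Measure.map Y μ = gaussianReal 0 v)
    (a b ε : ℝ) (hε : ε ∈ Set.Ioo (0 : ℝ) 1)
    (q : ℝ) (hq : cdf (gaussianReal 0 1) q = 1 - ε) :
    ENNReal.ofReal (1 - ε) ≤ μ {x | a + Y x ≥ b} ↔ a - Real.sqrt v * q ≥ b :=
  stmt_3_general μ v Y hY a b ε q hq
end

section
/- Let ω be a real random variable with E[ω] = 0 and finite variance σ² (ω square-integrable), let a, b ∈ ℝ, and let ε ∈ (0,1). If a + σ·√((1−ε)/ε) ≤ b, then P(a + ω ≤ b) ≥ 1 − ε. In other words, replacing the Gaussian margin Φ^{-1}(1−ε)·σ by the distributionally robust margin √((1−ε)/ε)·σ enforces the chance constraint for every distribution of ω with zero mean and variance σ². -/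
/-! Cantelli's inequality: for a centred `ω` with `E[ω²] = s` and `t > 0`, Markov's inequality
applied to `(ω + u)²` gives `P(ω ≥ t) ≤ (s + u²) / (t + u)²`, which is minimised at `u = s / t`
with value `s / (s + t²)`. The margin `t ≥ σ √((1 - ε) / ε)` is exactly what makes this at most
`ε`. When `σ = 0` the variable vanishes almost surely and any margin `t ≥ 0` works. -/

open MeasureTheory

lemma measure_gt_eq_zero_of_integral_sq_eq_zero {X : Type*} [MeasurableSpace X] {μ : Measure X}
    {ω : X → ℝ} (hL2 : MemLp ω 2 μ) (h0 : ∫ x, ω x ^ 2 ∂μ = 0) {t : ℝ} (ht : 0 ≤ t) :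
    μ {x | t < ω x} = 0 := by
  have hsq : (fun x => ω x ^ 2) =ᵐ[μ] 0 :=
    (integral_eq_zero_iff_of_nonneg (fun _ => sq_nonneg _) hL2.integrable_sq).mp h0
  have hle : ∀ᵐ x ∂μ, ω x ≤ t := by
    filter_upwards [hsq] with x hx
    rw [pow_eq_zero_iff two_ne_zero |>.mp hx]
    exact ht
  simpa only [not_le] using ae_iff.mp hle

section Cantelli

variable {X : Type*} [MeasurableSpace X] {μ : Measure X} [IsProbabilityMeasure μ] {ω : X → ℝ}

lemma integral_add_const_sq (hL2 : MemLp ω 2 μ) (hmean : ∫ x, ω x ∂μ = 0) (u : ℝ) :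
    ∫ x, (ω x + u) ^ 2 ∂μ = ∫ x, ω x ^ 2 ∂μ + u ^ 2 := by
  have hω : Integrable ω μ := hL2.integrable one_le_two
  have hlin : Integrable (fun x => 2 * u * ω x + u ^ 2) μ :=
    (hω.const_mul _).add (integrable_const _)
  have hexpand : ∀ x, (ω x + u) ^ 2 = ω x ^ 2 + (2 * u * ω x + u ^ 2) := fun x => by ring
  simp_rw [hexpand]
  rw [integral_add hL2.integrable_sq hlin, integral_add (hω.const_mul _) (integrable_const _),
    integral_const_mul, hmean]
  simp

lemma sq_add_mul_measureReal_ge_le (hL2 : MemLp ω 2 μ) (hmean : ∫ x, ω x ∂μ = 0)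
    {t u : ℝ} (htu : 0 ≤ t + u) :
    (t + u) ^ 2 * μ.real {x | t ≤ ω x} ≤ ∫ x, ω x ^ 2 ∂μ + u ^ 2 := by
  have hsub : {x | t ≤ ω x} ⊆ {x | (t + u) ^ 2 ≤ (ω x + u) ^ 2} := fun x hx =>
    pow_le_pow_left₀ htu (by simp only [Set.mem_ofPred_eq] at hx; linarith) 2
  calc (t + u) ^ 2 * μ.real {x | t ≤ ω x}
      ≤ (t + u) ^ 2 * μ.real {x | (t + u) ^ 2 ≤ (ω x + u) ^ 2} := by gcongr; finiteness
    _ ≤ ∫ x, (ω x + u) ^ 2 ∂μ :=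
      mul_meas_ge_le_integral_of_nonneg (ae_of_all _ fun _ => sq_nonneg _)
        (hL2.add (memLp_const u)).integrable_sq _
    _ = ∫ x, ω x ^ 2 ∂μ + u ^ 2 := integral_add_const_sq hL2 hmean u

theorem measureReal_ge_le_cantelli (hL2 : MemLp ω 2 μ) (hmean : ∫ x, ω x ∂μ = 0)
    {t : ℝ} (ht : 0 < t) :
    μ.real {x | t ≤ ω x} ≤ (∫ x, ω x ^ 2 ∂μ) / (∫ x, ω x ^ 2 ∂μ + t ^ 2) := by
  set s := ∫ x, ω x ^ 2 ∂μ
  have hs : 0 ≤ s := integral_nonneg fun _ => sq_nonneg _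
  have hmarkov := sq_add_mul_measureReal_ge_le hL2 hmean (t := t) (u := s / t) (by positivity)
  have hst : 0 < s + t ^ 2 := by positivity
  have e1 : (t + s / t) ^ 2 = (s + t ^ 2) ^ 2 / t ^ 2 := by field_simp; ring
  have e2 : s + (s / t) ^ 2 = (s + t ^ 2) * s / t ^ 2 := by field_simp; ring
  rw [e1, e2, div_mul_eq_mul_div, div_le_div_iff_of_pos_right (by positivity)] at hmarkov
  rw [le_div_iff₀ hst, mul_comm]
  exact le_of_mul_le_mul_left (by linarith) hst

theorem measureReal_gt_le_of_sqrt_margin (hL2 : MemLp ω 2 μ) (hmean : ∫ x, ω x ∂μ = 0)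
    {σ ε t : ℝ} (hσ : 0 ≤ σ) (hvar : ∫ x, ω x ^ 2 ∂μ = σ ^ 2) (hε0 : 0 < ε) (hε1 : ε < 1)
    (ht : σ * Real.sqrt ((1 - ε) / ε) ≤ t) :
    μ.real {x | t < ω x} ≤ ε := by
  have hr : 0 < (1 - ε) / ε := div_pos (by linarith) hε0
  rcases hσ.eq_or_lt with rfl | hσpos
  · have h0 : ∫ x, ω x ^ 2 ∂μ = 0 := by rw [hvar]; ring
    rw [measureReal_def, measure_gt_eq_zero_of_integral_sq_eq_zero hL2 h0 (by simpa using ht)]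
    simpa using hε0.le
  have htpos : 0 < t := lt_of_lt_of_le (by positivity) ht
  have hmargin : σ ^ 2 * (1 - ε) ≤ ε * t ^ 2 := by
    have hsq : σ ^ 2 * ((1 - ε) / ε) ≤ t ^ 2 := by
      calc σ ^ 2 * ((1 - ε) / ε) = (σ * Real.sqrt ((1 - ε) / ε)) ^ 2 := by
            rw [mul_pow, Real.sq_sqrt hr.le]
        _ ≤ t ^ 2 := pow_le_pow_left₀ (by positivity) ht 2
    rwa [mul_div_assoc', div_le_iff₀ hε0, mul_comm _ ε] at hsq
  calc μ.real {x | t < ω x} ≤ μ.real {x | t ≤ ω x} :=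
        measureReal_mono (Set.ofPred_subset_ofPred.mpr fun _ => le_of_lt)
    _ ≤ σ ^ 2 / (σ ^ 2 + t ^ 2) := hvar ▸ measureReal_ge_le_cantelli hL2 hmean htpos
    _ ≤ ε := by rw [div_le_iff₀ (by positivity)]; linarith

end Cantelli

theorem stmt_6_general {X : Type} [MeasurableSpace X] (μ : Measure X) [IsProbabilityMeasure μ]
    (ω : X → ℝ) (hL2 : MemLp ω 2 μ)
    (hmean : ∫ x, ω x ∂μ = 0)
    (σ : ℝ) (hσ : 0 ≤ σ) (hvar : σ ^ 2 = ∫ x, (ω x) ^ 2 ∂μ)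
    (a b ε : ℝ) (hε : ε ∈ Set.Ioo (0 : ℝ) 1)
    (h : a + σ * Real.sqrt ((1 - ε) / ε) ≤ b) :
    ENNReal.ofReal (1 - ε) ≤ μ {x | a + ω x ≤ b} := by
  obtain ⟨hε0, hε1⟩ := hε
  have htail : μ.real {x | b - a < ω x} ≤ ε :=
    measureReal_gt_le_of_sqrt_margin hL2 hmean hσ hvar.symm hε0 hε1 (by linarith)
  have hcompl : {x | a + ω x ≤ b} = {x | b - a < ω x}ᶜ := by
    ext x
    simp only [Set.mem_compl_iff, Set.mem_ofPred_eq, not_lt]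
    constructor <;> intro <;> linarith
  have hnull : NullMeasurableSet {x | b - a < ω x} μ :=
    nullMeasurableSet_lt aemeasurable_const hL2.aestronglyMeasurable.aemeasurable
  rw [← ofReal_measureReal, hcompl, probReal_compl_eq_one_sub₀ hnull]
  exact ENNReal.ofReal_le_ofReal (by linarith)

/-- Let `ω` be a square-integrable real random variable with mean `0`
and variance `σ²` (so `σ ≥ 0` and `σ² = E[ω²]`), let `a, b ∈ ℝ` and `ε ∈ (0,1)`.
If the distributionally robust tightened constraint `a + σ·√((1-ε)/ε) ≤ b` holds,
then the chance constraint `P(a + ω ≤ b) ≥ 1 - ε` holds. -/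
theorem stmt_6 {X : Type} [MeasurableSpace X] (μ : Measure X) [IsProbabilityMeasure μ]
    (ω : X → ℝ) (hωmeas : Measurable ω) (hL2 : MemLp ω 2 μ)
    (hmean : ∫ x, ω x ∂μ = 0)
    (σ : ℝ) (hσ : 0 ≤ σ) (hvar : σ ^ 2 = ∫ x, (ω x) ^ 2 ∂μ)
    (a b ε : ℝ) (hε : ε ∈ Set.Ioo (0 : ℝ) 1)
    (h : a + σ * Real.sqrt ((1 - ε) / ε) ≤ b) :
    ENNReal.ofReal (1 - ε) ≤ μ {x | a + ω x ≤ b} :=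
  stmt_6_general μ ω hL2 hmean σ hσ hvar a b ε hε h
end
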